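/- Fix p_H ∈ (0,1), δ ∈ (0,p_H), and α_L, α_H ∈ (1/2,1). There exists λ ∈ ℝ with β_L(λ) ≥ α_L and β_H(λ) ≥ α_H (normal-approximation PCS constraints) if and only if n ≥ n*, where n* = ((√(2p_H(1−p_H))Φ⁻¹(α_L) − √((p_H−δ)(1−p_H+δ)+p_H(1−p_H))Φ⁻¹(1−α_H))/δ)². -/

import Mathlib

open MeasureTheory ProbabilityTheory Set

noncomputable def stdNormalCDF (x : ℝ) : ℝ := ((gaussianReal 0 1) (Set.Iic x)).toReal

noncomputable def stdNormalCDFInv : ℝ → ℝ := Function.invFun stdNormalCDF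

/-! Each constraint is a half-line in `λ`: `β_L(λ) ≥ α_L` iff `λ ≥ λ_L(n) = σ_L Φ⁻¹(α_L) / √n` and
`β_H(λ) ≥ α_H` iff `λ ≤ λ_H(n) = δ + σ_H Φ⁻¹(1 - α_H) / √n`. Hence a feasible `λ` exists iff
`λ_L(n) ≤ λ_H(n)`, i.e. iff `σ_L Φ⁻¹(α_L) - σ_H Φ⁻¹(1 - α_H) ≤ δ √n`. Since `α_L > 1/2 > 1 - α_H`,
the left side is nonnegative, so squaring gives `n ≥ n*`. -/

section InvFun

variable {α β : Type*} [LinearOrder α] [Preorder β] [Nonempty α] {f : α → β}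

theorem StrictMono.le_apply_iff_invFun_le (hf : StrictMono f) {p : β} (hp : p ∈ range f)
    (y : α) : p ≤ f y ↔ Function.invFun f p ≤ y := by
  conv_lhs => rw [← Function.invFun_eq hp]
  exact hf.le_iff_le

theorem StrictMono.apply_le_iff_le_invFun (hf : StrictMono f) {p : β} (hp : p ∈ range f)
    (y : α) : f y ≤ p ↔ y ≤ Function.invFun f p := by
  conv_lhs => rw [← Function.invFun_eq hp]
  exact hf.le_iff_le

end InvFun

theorem stdNormalCDF_eq_cdf : stdNormalCDF = cdf (gaussianReal 0 1) := by
  funext x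
  rw [stdNormalCDF, cdf_eq_real, measureReal_def]

theorem stdNormalCDF_eq_integral (x : ℝ) :
    stdNormalCDF x = ∫ t in Iic x, gaussianPDFReal 0 1 t := by
  rw [stdNormalCDF, gaussianReal_apply_eq_integral 0 one_ne_zero,
    ENNReal.toReal_ofReal (integral_nonneg fun t => gaussianPDFReal_nonneg 0 1 t)]

theorem strictMono_stdNormalCDF : StrictMono stdNormalCDF := by
  intro x y hxy
  have hint := integrable_gaussianPDFReal 0 1
  have hsplit : stdNormalCDF y = stdNormalCDF x + ∫ t in Ioc x y, gaussianPDFReal 0 1 t := by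
    rw [stdNormalCDF_eq_integral, stdNormalCDF_eq_integral,
      ← setIntegral_union (Iic_disjoint_Ioc le_rfl) measurableSet_Ioc
        hint.integrableOn hint.integrableOn, Iic_union_Ioc_eq_Iic hxy.le]
  have hsupport : Function.support (gaussianPDFReal 0 1) ∩ Ioc x y = Ioc x y :=
    inter_eq_right.mpr fun t _ => (gaussianPDFReal_pos 0 1 t one_ne_zero).ne'
  have hpos : 0 < ∫ t in Ioc x y, gaussianPDFReal 0 1 t := by
    rw [setIntegral_pos_iff_support_of_nonneg_ae
      (ae_of_all _ fun t => gaussianPDFReal_nonneg 0 1 t) hint.integrableOn,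
      hsupport, Real.volume_Ioc]
    simp [hxy]
  linarith

theorem continuous_stdNormalCDF : Continuous stdNormalCDF := by
  have hint := integrable_gaussianPDFReal 0 1
  have h : ∀ x, stdNormalCDF x = stdNormalCDF 0 + ∫ t in (0:ℝ)..x, gaussianPDFReal 0 1 t := by
    intro x
    rw [stdNormalCDF_eq_integral, stdNormalCDF_eq_integral,
      ← intervalIntegral.integral_Iic_sub_Iic hint.integrableOn hint.integrableOn]
    ring
  rw [funext h]
  exact continuous_const.add (hint.continuous_primitive 0)

theorem stdNormalCDF_neg (x : ℝ) : stdNormalCDF (-x) = 1 - stdNormalCDF x := by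
  have hatom : gaussianReal 0 1 {x} = 0 :=
    gaussianReal_absolutelyContinuous 0 one_ne_zero Real.volume_singleton
  have hmap : (gaussianReal 0 1).map (fun x => -x) = gaussianReal 0 1 := by
    simpa using gaussianReal_map_neg (μ := 0) (v := 1)
  have hsymm : (gaussianReal 0 1).real (Iic (-x)) = (gaussianReal 0 1).real (Ici x) := by
    conv_lhs => rw [← hmap, map_measureReal_apply measurable_neg measurableSet_Iic]
    simp
  rw [stdNormalCDF, stdNormalCDF, ← measureReal_def, ← measureReal_def, hsymm,
    ← measureReal_congr (Ioi_ae_eq_Ici' hatom), ← compl_Iic, measureReal_compl measurableSet_Iic,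
    probReal_univ]

theorem stdNormalCDF_zero : stdNormalCDF 0 = 1 / 2 := by
  have h := stdNormalCDF_neg 0
  rw [neg_zero] at h
  linarith

theorem Ioo_subset_range_stdNormalCDF : Ioo 0 1 ⊆ range stdNormalCDF := by
  intro p hp
  have hbot : Filter.Tendsto stdNormalCDF Filter.atBot (nhds 0) :=
    stdNormalCDF_eq_cdf ▸ tendsto_cdf_atBot _
  have htop : Filter.Tendsto stdNormalCDF Filter.atTop (nhds 1) :=
    stdNormalCDF_eq_cdf ▸ tendsto_cdf_atTop _
  obtain ⟨a, ha⟩ := (hbot.eventually_lt_const hp.1).exists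
  obtain ⟨b, hb⟩ := (htop.eventually_const_lt hp.2).exists
  exact intermediate_value_univ a b continuous_stdNormalCDF ⟨ha.le, hb.le⟩

section Quantile

variable {p : ℝ}

theorem le_stdNormalCDF_iff (hp : p ∈ Ioo 0 1) (y : ℝ) :
    p ≤ stdNormalCDF y ↔ stdNormalCDFInv p ≤ y :=
  strictMono_stdNormalCDF.le_apply_iff_invFun_le (Ioo_subset_range_stdNormalCDF hp) y

theorem stdNormalCDF_le_iff (hp : p ∈ Ioo 0 1) (y : ℝ) :
    stdNormalCDF y ≤ p ↔ y ≤ stdNormalCDFInv p :=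
  strictMono_stdNormalCDF.apply_le_iff_le_invFun (Ioo_subset_range_stdNormalCDF hp) y

theorem stdNormalCDFInv_nonneg (hp : p ∈ Ico (1 / 2) 1) : 0 ≤ stdNormalCDFInv p := by
  rw [← stdNormalCDF_le_iff ⟨by linarith [hp.1], hp.2⟩, stdNormalCDF_zero]
  exact hp.1

theorem stdNormalCDFInv_nonpos (hp : p ∈ Ioc 0 (1 / 2)) : stdNormalCDFInv p ≤ 0 := by
  rw [← le_stdNormalCDF_iff ⟨hp.1, by linarith [hp.2]⟩, stdNormalCDF_zero]
  exact hp.2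

end Quantile

section Constraints

variable {α q s lam δ : ℝ}

theorem le_stdNormalCDF_mul_div_iff (hα : α ∈ Ioo 0 1) (hq : 0 < q) (hs : 0 < s) :
    α ≤ stdNormalCDF (q * lam / s) ↔ s * stdNormalCDFInv α / q ≤ lam := by
  rw [le_stdNormalCDF_iff hα, le_div_iff₀ hs, div_le_iff₀ hq, mul_comm q, mul_comm s]

theorem le_one_sub_stdNormalCDF_mul_div_iff (hα : α ∈ Ioo 0 1) (hq : 0 < q) (hs : 0 < s) :
    α ≤ 1 - stdNormalCDF (q * (lam - δ) / s) ↔ lam ≤ δ + s * stdNormalCDFInv (1 - α) / q := by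
  have hα' : 1 - α ∈ Ioo 0 1 := ⟨by linarith [hα.2], by linarith [hα.1]⟩
  rw [le_sub_comm, stdNormalCDF_le_iff hα', div_le_iff₀ hs, ← sub_le_iff_le_add',
    le_div_iff₀ hq, mul_comm q, mul_comm s]

end Constraints

theorem div_sqrt_le_add_div_sqrt_iff {n δ A B : ℝ} (hn : 0 < n) (hδ : 0 < δ) (hBA : B ≤ A) :
    A / Real.sqrt n ≤ δ + B / Real.sqrt n ↔ ((A - B) / δ) ^ 2 ≤ n := by
  have hq : 0 < Real.sqrt n := Real.sqrt_pos.mpr hn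
  rw [← Real.le_sqrt (div_nonneg (sub_nonneg.mpr hBA) hδ.le) hn.le, div_le_iff₀ hδ,
    div_le_iff₀ hq, add_mul, div_mul_cancel₀ _ hq.ne', mul_comm]
  constructor <;> intro h <;> linarith

theorem feasible_iff_sample_size_at_least_nstar
    (pH δ αL αH n : ℝ) (hpH : pH ∈ Set.Ioo (0:ℝ) 1) (hδ : δ ∈ Set.Ioo (0:ℝ) pH)
    (hαL : αL ∈ Set.Ioo (1/2 : ℝ) 1) (hαH : αH ∈ Set.Ioo (1/2 : ℝ) 1) (hn : 0 < n)
    (nstar : ℝ)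
    (hnstar : nstar = ((Real.sqrt (2 * pH * (1 - pH)) * stdNormalCDFInv αL
        - Real.sqrt ((pH - δ) * (1 - pH + δ) + pH * (1 - pH)) * stdNormalCDFInv (1 - αH))
        / δ) ^ 2) :
    (∃ lam : ℝ,
      αL ≤ stdNormalCDF (Real.sqrt n * lam / Real.sqrt (2 * pH * (1 - pH))) ∧
      αH ≤ 1 - stdNormalCDF (Real.sqrt n * (lam - δ)
          / Real.sqrt ((pH - δ) * (1 - pH + δ) + pH * (1 - pH))))
      ↔ nstar ≤ n := by
  obtain ⟨hpH0, hpH1⟩ := hpH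
  obtain ⟨hδ0, hδpH⟩ := hδ
  set σL := Real.sqrt (2 * pH * (1 - pH))
  set σH := Real.sqrt ((pH - δ) * (1 - pH + δ) + pH * (1 - pH))
  have hσL : 0 < σL := Real.sqrt_pos.mpr (by nlinarith)
  have hσH : 0 < σH := Real.sqrt_pos.mpr (by nlinarith)
  have hq : 0 < Real.sqrt n := Real.sqrt_pos.mpr hn
  have ha : 0 ≤ stdNormalCDFInv αL := stdNormalCDFInv_nonneg ⟨hαL.1.le, hαL.2⟩
  have hb : stdNormalCDFInv (1 - αH) ≤ 0 :=
    stdNormalCDFInv_nonpos ⟨by linarith [hαH.2], by linarith [hαH.1]⟩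
  calc _ ↔ ∃ lam, lam ∈ Icc (σL * stdNormalCDFInv αL / Real.sqrt n)
          (δ + σH * stdNormalCDFInv (1 - αH) / Real.sqrt n) :=
        exists_congr fun lam => and_congr
          (le_stdNormalCDF_mul_div_iff ⟨by linarith [hαL.1], hαL.2⟩ hq hσL)
          (le_one_sub_stdNormalCDF_mul_div_iff ⟨by linarith [hαH.1], hαH.2⟩ hq hσH)
    _ ↔ _ := nonempty_Icc
    _ ↔ nstar ≤ n := by
        rw [hnstar]
        exact div_sqrt_le_add_div_sqrt_iff hn hδ0 (by nlinarith)
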